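/- arXiv:2407.13445 — 5 statements merged into one kernel-verified Lean document; each statement's English description precedes it below -/
import Mathlib

section
/- Let μ be a probability measure on ℝ and g: ℝ → ℝ a non-decreasing function. Then the quantile function of the pushforward measure g#μ equals g composed with the quantile function of μ, Lebesgue-almost-everywhere on (0,1): F_{g#μ}⁻(p) = g(F_μ⁻(p)) for a.e. p ∈ (0,1). -/
open Set MeasureTheory

/-- The quantile function (right-inverse of the cumulative distribution function)
of a measure ρ on ℝ. -/
noncomputable def quantileFn (ρ : MeasureTheory.Measure ℝ) (p : ℝ) : ℝ :=
  sInf {x : ℝ | p ≤ (ρ (Set.Iic x)).toReal}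

/-!
Write `q = quantileFn μ` and `Q = quantileFn (g#μ)`, and let `0 < p' < p < 1`. Monotonicity of `g`
gives `Q p ≤ g (q p)`. Conversely, `g⁻¹' (-∞, Q p]` is a lower set of `μ`-mass at least `p`, while
`(-∞, q p')` has mass at most `p' < p`; so the lower set contains `q p'`, i.e. `g (q p') ≤ Q p`.
Hence at two points `p < p'` where `Q` and `g ∘ q` differ, the nonempty open intervals
`(Q p, g (q p))` and `(Q p', g (q p'))` are disjoint, and there are only countably many such points.
-/

open ProbabilityTheory Filter Topology

theorem countable_setOf_lt_of_right_le_left {α β : Type*} [LinearOrder α] [LinearOrder β]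
    [TopologicalSpace β] [OrderTopology β] [DenselyOrdered β]
    [TopologicalSpace.SeparableSpace β] {s : Set α} {f g : α → β}
    (hgf : ∀ ⦃p⦄, p ∈ s → ∀ ⦃q⦄, q ∈ s → p < q → g p ≤ f q) :
    {p ∈ s | f p < g p}.Countable := by
  refine PairwiseDisjoint.countable_of_isOpen (s := fun p => Ioo (f p) (g p)) ?_
    (fun _ _ => isOpen_Ioo) fun p hp => nonempty_Ioo.2 hp.2
  have hdisj : ∀ ⦃p⦄, p ∈ s → ∀ ⦃q⦄, q ∈ s → p < q →
      Disjoint (Ioo (f p) (g p)) (Ioo (f q) (g q)) := fun p hp q hq hpq =>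
    (Ioi_disjoint_Iio_of_le (hgf hp hq hpq)).symm.mono Ioo_subset_Iio_self Ioo_subset_Ioi_self
  intro p hp q hq hpq
  rcases hpq.lt_or_gt with h | h
  · exact hdisj hp.1 hq.1 h
  · exact (hdisj hq.1 hp.1 h).symm

namespace ProbabilityTheory

variable {μ : Measure ℝ} {p x : ℝ}

lemma bddBelow_setOf_le_cdf (hp : 0 < p) : BddBelow {x | p ≤ cdf μ x} := by
  obtain ⟨b, hb⟩ :=
    ((tendsto_cdf_atBot μ).eventually (eventually_lt_nhds hp)).exists_forall_of_atBot
  exact ⟨b, fun x hx => not_lt.1 fun hxb => (hb x hxb.le).not_ge hx⟩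

lemma nonempty_setOf_le_cdf (hp : p < 1) : {x | p ≤ cdf μ x}.Nonempty :=
  ((tendsto_cdf_atTop μ).eventually (eventually_ge_nhds hp)).exists

lemma le_cdf_sInf (hp : p < 1) : p ≤ cdf μ (sInf {x | p ≤ cdf μ x}) := by
  refine ge_of_tendsto (((cdf μ).right_continuous _).mono Ioi_subset_Ici_self).tendsto ?_
  filter_upwards [self_mem_nhdsWithin] with y hy
  obtain ⟨z, hz, hzy⟩ := exists_lt_of_csInf_lt (nonempty_setOf_le_cdf hp) hy
  exact hz.trans (monotone_cdf μ hzy.le)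

variable [IsProbabilityMeasure μ]

lemma quantileFn_eq_sInf_cdf : quantileFn μ p = sInf {x | p ≤ cdf μ x} := by
  simp only [quantileFn, cdf_eq_real, measureReal_def]

lemma quantileFn_le_iff (hp0 : 0 < p) (hp1 : p < 1) : quantileFn μ p ≤ x ↔ p ≤ cdf μ x := by
  rw [quantileFn_eq_sInf_cdf]
  exact ⟨fun h => (le_cdf_sInf hp1).trans (monotone_cdf μ h),
    csInf_le (bddBelow_setOf_le_cdf hp0)⟩

lemma measureReal_Iio_eq_leftLim_cdf : μ.real (Iio x) = Function.leftLim (cdf μ) x := by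
  have hnonneg : 0 ≤ Function.leftLim (cdf μ) x :=
    (cdf_nonneg μ (x - 1)).trans ((monotone_cdf μ).le_leftLim (by linarith))
  conv_lhs => rw [← measure_cdf μ]
  rw [measureReal_def, StieltjesFunction.measure_Iio _ (tendsto_cdf_atBot μ), sub_zero,
    ENNReal.toReal_ofReal hnonneg]

lemma measureReal_Iio_quantileFn_le (hp0 : 0 < p) (hp1 : p < 1) :
    μ.real (Iio (quantileFn μ p)) ≤ p := by
  rw [measureReal_Iio_eq_leftLim_cdf]
  refine le_of_tendsto ((monotone_cdf μ).tendsto_leftLim _) ?_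
  filter_upwards [self_mem_nhdsWithin] with y hy
  exact (not_le.1 fun h => (not_le.2 hy) ((quantileFn_le_iff hp0 hp1).2 h)).le

lemma cdf_map_eq_measureReal_preimage {g : ℝ → ℝ} (hg : Measurable g) (t : ℝ) :
    cdf (μ.map g) t = μ.real (g ⁻¹' Iic t) := by
  have := Measure.isProbabilityMeasure_map (μ := μ) hg.aemeasurable
  rw [cdf_eq_real, map_measureReal_apply hg measurableSet_Iic]

variable {g : ℝ → ℝ}

lemma quantileFn_map_le (hg : Monotone g) (hp0 : 0 < p) (hp1 : p < 1) :
    quantileFn (μ.map g) p ≤ g (quantileFn μ p) := by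
  have := Measure.isProbabilityMeasure_map (μ := μ) hg.measurable.aemeasurable
  rw [quantileFn_le_iff hp0 hp1, cdf_map_eq_measureReal_preimage hg.measurable]
  calc p ≤ cdf μ (quantileFn μ p) := (quantileFn_le_iff hp0 hp1).1 le_rfl
    _ = μ.real (Iic (quantileFn μ p)) := cdf_eq_real μ _
    _ ≤ μ.real (g ⁻¹' Iic (g (quantileFn μ p))) := measureReal_mono fun _ hx => hg hx

lemma le_quantileFn_map (hg : Monotone g) {q : ℝ} (hp0 : 0 < p) (hpq : p < q) (hq1 : q < 1) :
    g (quantileFn μ p) ≤ quantileFn (μ.map g) q := by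
  have := Measure.isProbabilityMeasure_map (μ := μ) hg.measurable.aemeasurable
  by_contra! hlt
  have hsub : g ⁻¹' Iic (quantileFn (μ.map g) q) ⊆ Iio (quantileFn μ p) :=
    fun x hx => not_le.1 fun h => hlt.not_ge ((hg h).trans hx)
  refine lt_irrefl q ?_
  calc q ≤ cdf (μ.map g) (quantileFn (μ.map g) q) :=
        (quantileFn_le_iff (hp0.trans hpq) hq1).1 le_rfl
    _ = μ.real (g ⁻¹' Iic (quantileFn (μ.map g) q)) :=
        cdf_map_eq_measureReal_preimage hg.measurable _
    _ ≤ μ.real (Iio (quantileFn μ p)) := measureReal_mono hsub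
    _ ≤ p := measureReal_Iio_quantileFn_le hp0 (hpq.trans hq1)
    _ < q := hpq

end ProbabilityTheory

/-- For a probability measure μ on ℝ and a non-decreasing g : ℝ → ℝ, the quantile
function of the pushforward g#μ equals g composed with the quantile function of μ,
Lebesgue-a.e. on (0,1). -/
theorem quantile_pushforward_monotone (μ : MeasureTheory.Measure ℝ)
    [IsProbabilityMeasure μ] (g : ℝ → ℝ) (hg : Monotone g) :
    ∀ᵐ p ∂(volume.restrict (Set.Ioo (0:ℝ) 1)),
      quantileFn (Measure.map g μ) p = g (quantileFn μ p) := by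
  have hbad : {p ∈ Ioo (0 : ℝ) 1 | quantileFn (μ.map g) p < g (quantileFn μ p)}.Countable :=
    countable_setOf_lt_of_right_le_left fun p hp _ hq hpq => le_quantileFn_map hg hp.1 hpq hq.2
  rw [ae_restrict_iff' measurableSet_Ioo]
  filter_upwards [hbad.ae_notMem volume] with p hgood hp
  exact (quantileFn_map_le hg hp.1 hp.2).eq_of_not_lt fun hlt => hgood ⟨hp, hlt⟩
end

section
/- Let O ⊂ ℝᵈ be an open set such that any two points of O can be joined by a Lipschitz curve contained in O. Then there exists a sequence (C_k) of compact subsets of O, each of which is Lipschitz-arc-connected, with C_k ⊆ C_{k+1} for all k and ∪_k C_k = O. -/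
open Set Metric
open scoped NNReal

variable {E : Type*} [NormedAddCommGroup E] [NormedSpace ℝ E]

/-- Joinability by a Lipschitz curve inside `A`. -/
def JoinedLip (A : Set E) (x y : E) : Prop :=
  ∃ (K : ℝ≥0) (w : ℝ → E),
    LipschitzOnWith K w (Set.Icc 0 1) ∧ w 0 = x ∧ w 1 = y ∧
    ∀ t ∈ Set.Icc (0:ℝ) 1, w t ∈ A

theorem JoinedLip.mono {A B : Set E} {x y : E} (hAB : A ⊆ B) (h : JoinedLip A x y) :
    JoinedLip B x y := by
  obtain ⟨K, w, h1, h2, h3, h4⟩ := h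
  exact ⟨K, w, h1, h2, h3, fun t ht => hAB (h4 t ht)⟩

theorem JoinedLip.symm {A : Set E} {x y : E} (h : JoinedLip A x y) : JoinedLip A y x := by
  obtain ⟨K, w, h1, h2, h3, h4⟩ := h
  refine ⟨K, fun s => w (1 - s), ?_, by simpa using h3, by simpa using h2, ?_⟩
  · rw [lipschitzOnWith_iff_dist_le_mul]
    intro a ha b hb
    have ha' : (1:ℝ) - a ∈ Icc (0:ℝ) 1 := ⟨by linarith [ha.1, ha.2], by linarith [ha.1, ha.2]⟩
    have hb' : (1:ℝ) - b ∈ Icc (0:ℝ) 1 := ⟨by linarith [hb.1, hb.2], by linarith [hb.1, hb.2]⟩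
    have := h1.dist_le_mul _ ha' _ hb'
    have hd : dist ((1:ℝ) - a) (1 - b) = dist a b := by
      simp [Real.dist_eq]; rw [abs_sub_comm]; ring_nf
    linarith [this, hd ▸ this]
  · intro t ht
    exact h4 _ ⟨by linarith [ht.1, ht.2], by linarith [ht.1, ht.2]⟩

theorem JoinedLip.trans {A : Set E} {x y z : E} (h : JoinedLip A x y) (h' : JoinedLip A y z) :
    JoinedLip A x z := by
  obtain ⟨K₁, u, hu, hu0, hu1, huA⟩ := h
  obtain ⟨K₂, v, hv, hv0, hv1, hvA⟩ := h'
  set w : ℝ → E := fun t => if t ≤ 1/2 then u (2*t) else v (2*t - 1) with hw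
  have hmem : ∀ t ∈ Icc (0:ℝ) 1, (t ≤ 1/2 → 2*t ∈ Icc (0:ℝ) 1) ∧ (¬ t ≤ 1/2 → 2*t - 1 ∈ Icc (0:ℝ) 1) := by
    intro t ht
    constructor <;> intro h <;> constructor <;> [linarith [ht.1]; linarith; linarith; linarith [ht.2]]
  -- key distance estimate, stated for s ≤ t
  have key : ∀ s ∈ Icc (0:ℝ) 1, ∀ t ∈ Icc (0:ℝ) 1, s ≤ t →
      dist (w s) (w t) ≤ (2*(K₁:ℝ) + 2*K₂) * dist s t := by
    intro s hs t ht hst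
    have hK₁ : (0:ℝ) ≤ K₁ := K₁.coe_nonneg
    have hK₂ : (0:ℝ) ≤ K₂ := K₂.coe_nonneg
    have hdst : dist s t = t - s := by rw [Real.dist_eq, abs_sub_comm, abs_of_nonneg (by linarith)]
    by_cases h1 : s ≤ 1/2 <;> by_cases h2 : t ≤ 1/2
    · simp only [hw, if_pos h1, if_pos h2]
      have := hu.dist_le_mul _ ((hmem s hs).1 h1) _ ((hmem t ht).1 h2)
      have hd2 : dist (2*s) (2*t) = 2 * dist s t := by
        rw [Real.dist_eq, Real.dist_eq, show 2*s - 2*t = 2*(s-t) by ring, abs_mul, abs_two]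
      rw [hd2] at this
      nlinarith [dist_nonneg (x := s) (y := t)]
    · simp only [hw, if_pos h1, if_neg h2]
      have e1 := hu.dist_le_mul _ ((hmem s hs).1 h1) 1 (by norm_num)
      have e2 := hv.dist_le_mul 0 (by norm_num) _ ((hmem t ht).2 h2)
      have etri : dist (u (2*s)) (v (2*t-1)) ≤ dist (u (2*s)) (u 1) + dist (v 0) (v (2*t-1)) := by
        calc dist (u (2*s)) (v (2*t-1)) ≤ dist (u (2*s)) (u 1) + dist (u 1) (v (2*t-1)) :=
              dist_triangle _ _ _
        _ = dist (u (2*s)) (u 1) + dist (v 0) (v (2*t-1)) := by rw [hu1, hv0]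
      have hd1 : dist (2*s) (1:ℝ) = 1 - 2*s := by
        rw [Real.dist_eq, abs_of_nonpos (by linarith)]; ring
      have hd2 : dist (0:ℝ) (2*t-1) = 2*t - 1 := by
        rw [Real.dist_eq, abs_of_nonpos (by push_neg at h2; linarith)]; ring
      rw [hd1] at e1; rw [hd2] at e2
      push_neg at h2
      rw [hdst]
      nlinarith
    · linarith
    · simp only [hw, if_neg h1, if_neg h2]
      have := hv.dist_le_mul _ ((hmem s hs).2 h1) _ ((hmem t ht).2 h2)
      have hd2 : dist (2*s-1) (2*t-1) = 2 * dist s t := by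
        rw [Real.dist_eq, Real.dist_eq, show (2*s-1) - (2*t-1) = 2*(s-t) by ring, abs_mul, abs_two]
      rw [hd2] at this
      nlinarith [dist_nonneg (x := s) (y := t)]
  refine ⟨2*K₁ + 2*K₂, w, ?_, ?_, ?_, ?_⟩
  · rw [lipschitzOnWith_iff_dist_le_mul]
    intro a ha b hb
    have hc : ((2*K₁ + 2*K₂ : ℝ≥0) : ℝ) = 2*(K₁:ℝ) + 2*K₂ := by push_cast; ring
    rw [hc]
    rcases le_total a b with hab | hab
    · exact key a ha b hb hab
    · rw [dist_comm (w a), dist_comm a]; exact key b hb a ha hab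
  · simp [hw, hu0]
  · simp only [hw]
    norm_num [hv1]
  · intro t ht
    by_cases h : t ≤ 1/2
    · simp only [hw, if_pos h]; exact huA _ ((hmem t ht).1 h)
    · simp only [hw, if_neg h]; exact hvA _ ((hmem t ht).2 h)

/-- Any point on a Lipschitz curve is joined to the start point within the image. -/
theorem JoinedLip.reparam {K : ℝ≥0} {w : ℝ → E} (hw : LipschitzOnWith K w (Icc 0 1))
    {t : ℝ} (ht : t ∈ Icc (0:ℝ) 1) : JoinedLip (w '' Icc 0 1) (w t) (w 0) := by
  refine ⟨K, fun s => w (t * (1 - s)), ?_, by simp, by simp, ?_⟩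
  · rw [lipschitzOnWith_iff_dist_le_mul]
    intro a ha b hb
    have hma : t * (1 - a) ∈ Icc (0:ℝ) 1 := by
      constructor
      · exact mul_nonneg ht.1 (by linarith [ha.2])
      · nlinarith [ht.1, ht.2, ha.1, ha.2]
    have hmb : t * (1 - b) ∈ Icc (0:ℝ) 1 := by
      constructor
      · exact mul_nonneg ht.1 (by linarith [hb.2])
      · nlinarith [ht.1, ht.2, hb.1, hb.2]
    have h1 := hw.dist_le_mul _ hma _ hmb
    have h2 : dist (t * (1 - a)) (t * (1 - b)) ≤ dist a b := by
      simp only [Real.dist_eq]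
      rw [show t*(1-a) - t*(1-b) = t * (b - a) by ring, abs_mul, abs_of_nonneg ht.1,
        abs_sub_comm b a]
      nlinarith [abs_nonneg (a - b), ht.2]
    calc dist (w (t*(1-a))) (w (t*(1-b))) ≤ K * dist (t*(1-a)) (t*(1-b)) := h1
      _ ≤ K * dist a b := by
          exact mul_le_mul_of_nonneg_left h2 K.coe_nonneg
  · intro s hs
    refine ⟨t * (1 - s), ?_, rfl⟩
    constructor
    · exact mul_nonneg ht.1 (by linarith [hs.2])
    · nlinarith [ht.1, ht.2, hs.1, hs.2]

/-- A point of a closed ball is joined to the center inside the ball. -/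
theorem JoinedLip.segment_ball {c p : E} {r : ℝ} (hp : p ∈ closedBall c r) :
    JoinedLip (closedBall c r) p c := by
  refine ⟨‖c - p‖₊, fun s => p + s • (c - p), ?_, by simp, by simp, ?_⟩
  · refine (LipschitzWith.of_dist_le_mul fun a b => ?_).lipschitzOnWith
    rw [dist_eq_norm]
    have : p + a • (c - p) - (p + b • (c - p)) = (a - b) • (c - p) := by module
    rw [this, norm_smul]
    rw [coe_nnnorm, Real.dist_eq, Real.norm_eq_abs, mul_comm]
  · intro s hs
    rw [mem_closedBall, dist_eq_norm]
    have : p + s • (c - p) - c = (1 - s) • (p - c) := by module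
    rw [this, norm_smul, Real.norm_eq_abs, abs_of_nonneg (by linarith [hs.2])]
    have hpc : ‖p - c‖ ≤ r := by rwa [mem_closedBall, dist_eq_norm] at hp
    nlinarith [norm_nonneg (p - c), hs.1, hs.2]

/-- A set A ⊂ ℝᵈ is (Lipschitz-)arc-connected if any two of its points can be
joined by a Lipschitz curve contained in A. -/
def LipArcConnected {d : ℕ} (A : Set (EuclideanSpace ℝ (Fin d))) : Prop :=
  ∀ x ∈ A, ∀ y ∈ A, ∃ (K : ℝ≥0) (w : ℝ → EuclideanSpace ℝ (Fin d)),
    LipschitzOnWith K w (Set.Icc 0 1) ∧ w 0 = x ∧ w 1 = y ∧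
    ∀ t ∈ Set.Icc (0:ℝ) 1, w t ∈ A

/-- An open arc-connected set O ⊂ ℝᵈ is an increasing union of arc-connected
compact subsets. -/
theorem open_arc_connected_union_compact {d : ℕ}
    (O : Set (EuclideanSpace ℝ (Fin d))) (hO : IsOpen O)
    (hconn : LipArcConnected O) :
    ∃ C : ℕ → Set (EuclideanSpace ℝ (Fin d)),
      (∀ k, IsCompact (C k)) ∧ (∀ k, C k ⊆ O) ∧ (∀ k, LipArcConnected (C k)) ∧
      (∀ k, C k ⊆ C (k + 1)) ∧ (⋃ k, C k) = O := by
  rcases Set.eq_empty_or_nonempty O with rfl | hne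
  · exact ⟨fun _ => ∅, fun _ => isCompact_empty, fun _ => empty_subset _,
      fun _ x hx => absurd hx (notMem_empty x), fun _ => subset_rfl, by simp⟩
  have : Nonempty O := hne.to_subtype
  obtain ⟨u, hu⟩ := TopologicalSpace.exists_dense_seq O
  set S : Set (EuclideanSpace ℝ (Fin d) × ℝ) :=
    {p | (∃ n, (u n : EuclideanSpace ℝ (Fin d)) = p.1) ∧ (∃ q : ℚ, (q : ℝ) = p.2) ∧
      0 < p.2 ∧ closedBall p.1 p.2 ⊆ O} with hS
  have hcover : ∀ x ∈ O, ∃ p ∈ S, x ∈ closedBall p.1 p.2 := by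
    intro x hx
    obtain ⟨ε, hε, hball⟩ := Metric.isOpen_iff.1 hO x hx
    obtain ⟨q, hq0, hq⟩ := exists_rat_btwn (show (0:ℝ) < ε/3 by linarith)
    have hq0' : (0:ℝ) < q := by exact_mod_cast hq0
    obtain ⟨n, hn⟩ := Metric.denseRange_iff.1 hu ⟨x, hx⟩ q hq0'
    rw [Subtype.dist_eq] at hn
    refine ⟨((u n : EuclideanSpace ℝ (Fin d)), (q : ℝ)), ⟨⟨n, rfl⟩, ⟨q, rfl⟩, hq0', ?_⟩, ?_⟩
    · intro z hz
      rw [mem_closedBall] at hz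
      apply hball
      rw [mem_ball]
      calc dist z x ≤ dist z (u n : EuclideanSpace ℝ (Fin d)) + dist (u n : EuclideanSpace ℝ (Fin d)) x := dist_triangle _ _ _
        _ < q + q := by rw [dist_comm (u n : EuclideanSpace ℝ (Fin d)) x]; linarith
        _ < ε := by linarith
    · exact mem_closedBall.2 hn.le
  have hScount : S.Countable := by
    have hsub : S ⊆ (Set.range fun n => (u n : EuclideanSpace ℝ (Fin d))) ×ˢ (Set.range ((↑) : ℚ → ℝ)) := by
      rintro ⟨a, b⟩ ⟨⟨n, hn⟩, ⟨q, hq⟩, -, -⟩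
      exact ⟨⟨n, hn⟩, ⟨q, hq⟩⟩
    exact (((Set.countable_range _)).prod (Set.countable_range _)).mono hsub
  obtain ⟨x₀, hx₀⟩ := hne
  obtain ⟨p₀, hp₀, -⟩ := hcover x₀ hx₀
  obtain ⟨f, hf⟩ := hScount.exists_eq_range ⟨p₀, hp₀⟩
  set c : ℕ → EuclideanSpace ℝ (Fin d) := fun n => (f n).1 with hc
  set r : ℕ → ℝ := fun n => (f n).2 with hr
  have hfS : ∀ n, f n ∈ S := fun n => hf ▸ Set.mem_range_self n
  have hrpos : ∀ n, 0 < r n := fun n => (hfS n).2.2.1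
  have hballO : ∀ n, closedBall (c n) (r n) ⊆ O := fun n => (hfS n).2.2.2
  have hcO : ∀ n, c n ∈ O := fun n => hballO n (mem_closedBall_self (hrpos n).le)
  choose K w hlip h0 h1 hmem using fun n => hconn (c 0) (hcO 0) (c n) (hcO n)
  set C : ℕ → Set (EuclideanSpace ℝ (Fin d)) := fun k => ⋃ n ∈ Iic k, (w n '' Icc 0 1 ∪ closedBall (c n) (r n))
    with hC
  have hCsubO : ∀ k, C k ⊆ O := by
    intro k
    refine iUnion₂_subset fun n _ => union_subset ?_ (hballO n)
    rintro _ ⟨t, ht, rfl⟩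
    exact hmem n t ht
  have hJbase : ∀ k, ∀ p ∈ C k, JoinedLip (C k) p (c 0) := by
    intro k p hp
    simp only [hC, mem_iUnion, mem_Iic, exists_prop] at hp
    obtain ⟨n, hn, hp⟩ := hp
    have hsubim : w n '' Icc 0 1 ⊆ C k := fun z hz =>
      mem_biUnion (mem_Iic.2 hn) (Set.mem_union_left _ hz)
    rcases hp with him | hball
    · obtain ⟨t, ht, rfl⟩ := him
      have := (JoinedLip.reparam (hlip n) ht).mono hsubim
      rwa [h0 n] at this
    · have h2 : JoinedLip (C k) p (c n) :=
        (JoinedLip.segment_ball hball).mono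
          (fun z hz => mem_biUnion (mem_Iic.2 hn) (Set.mem_union_right _ hz))
      have h3 : JoinedLip (C k) (c n) (c 0) := by
        have := (JoinedLip.reparam (hlip n) (right_mem_Icc.2 zero_le_one)).mono hsubim
        rwa [h1 n, h0 n] at this
      exact h2.trans h3
  refine ⟨C, ?_, hCsubO, ?_, ?_, ?_⟩
  · intro k
    refine (Set.finite_Iic k).isCompact_biUnion fun n _ => ?_
    exact (isCompact_Icc.image_of_continuousOn (hlip n).continuousOn).union
      (isCompact_closedBall _ _)
  · intro k x hx y hy
    exact (hJbase k x hx).trans (hJbase k y hy).symm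
  · intro k
    exact biUnion_subset_biUnion_left (Iic_subset_Iic.2 (Nat.le_succ k))
  · apply Set.Subset.antisymm
    · exact iUnion_subset hCsubO
    · intro x hx
      obtain ⟨p, hpS, hxp⟩ := hcover x hx
      rw [hf] at hpS
      obtain ⟨n, rfl⟩ := hpS
      exact mem_iUnion.2 ⟨n, mem_biUnion (mem_Iic.2 le_rfl) (Set.mem_union_right _ hxp)⟩
end

section
/- Let U ⊂ ℝᵈ be open and arc-connected, and let (g_n) be a sequence of L-Lipschitz functions U → ℝᵈ such that each g_n = ∇φ_n for some C¹ ℓ-strongly convex function φ_n: U → ℝ. If (g_n) converges locally uniformly on U to a function g, then g is L-Lipschitz and there exists a C¹ ℓ-strongly convex function ψ: U → ℝ with g = ∇ψ on U. -/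
/-!
Normalise the potentials by `φₙ(x₀) = 0`. On a small ball inside `U` the gradients converge
uniformly, so by the mean value inequality the normalised potentials are Cauchy at every point
of the ball as soon as they are Cauchy at one of them; since `U` is convex, hence connected,
they converge pointwise on all of `U`. The theorem on differentiating locally uniform limits
then shows that the limit `ψ` has gradient `glim`, which is continuous, while strong convexity and
the Lipschitz bound are closed conditions and pass to pointwise limits.
-/

open Set Filter
open scoped NNReal Topology

theorem LipschitzOnWith.of_tendsto {α β ι : Type*} [PseudoEMetricSpace α] [PseudoEMetricSpace β]
    {l : Filter ι} [NeBot l] {K : ℝ≥0} {s : Set α} {F : ι → α → β} {f : α → β}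
    (hF : ∀ᶠ n in l, LipschitzOnWith K (F n) s)
    (hlim : ∀ x ∈ s, Tendsto (F · x) l (𝓝 (f x))) : LipschitzOnWith K f s :=
  fun _x hx _y hy =>
    le_of_tendsto ((hlim _ hx).edist (hlim _ hy)) (hF.mono fun _n hn => hn hx hy)

theorem UniformConvexOn.of_tendsto {E ι : Type*} [NormedAddCommGroup E] [NormedSpace ℝ E]
    {l : Filter ι} [NeBot l] {s : Set E} {φ : ℝ → ℝ} {F : ι → E → ℝ} {f : E → ℝ}
    (hF : ∀ᶠ n in l, UniformConvexOn s φ (F n))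
    (hlim : ∀ x ∈ s, Tendsto (F · x) l (𝓝 (f x))) : UniformConvexOn s φ f := by
  obtain ⟨n, hn⟩ := hF.exists
  refine ⟨hn.1, fun x hx y hy a b ha hb hab => ?_⟩
  exact le_of_tendsto_of_tendsto (hlim _ (hn.1 hx hy ha hb hab))
    ((((hlim x hx).const_smul a).add ((hlim y hy).const_smul b)).sub_const _)
    (hF.mono fun _n hn => hn.2 hx hy ha hb hab)

theorem contDiffOn_one_of_hasFDerivAt {𝕜 E F : Type*} [NontriviallyNormedField 𝕜]
    [NormedAddCommGroup E] [NormedSpace 𝕜 E] [NormedAddCommGroup F] [NormedSpace 𝕜 F]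
    {s : Set E} {f : E → F} {f' : E → E →L[𝕜] F} (hs : IsOpen s)
    (hf : ∀ x ∈ s, HasFDerivAt f (f' x) x) (hf' : ContinuousOn f' s) : ContDiffOn 𝕜 1 f s := by
  rw [← zero_add 1, contDiffOn_succ_iff_hasFDerivWithinAt_of_uniqueDiffOn hs.uniqueDiffOn]
  exact ⟨by simp, f', contDiffOn_zero.mpr hf', fun x hx => (hf x hx).hasFDerivWithinAt⟩

section LimitsOfDerivatives

variable {ι : Type*} {l : Filter ι} {E : Type*} [NormedAddCommGroup E] [NormedSpace ℝ E]
  [LocallyCompactSpace E] {G : Type*} [NormedAddCommGroup G] [NormedSpace ℝ G] {f : ι → E → G}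
  {f' : ι → E → E →L[ℝ] G} {g' : E → E →L[ℝ] G} {s : Set E}

theorem cauchy_map_of_tendstoLocallyUniformlyOn_fderiv (hs : IsOpen s) (h's : IsPreconnected s)
    (hf' : TendstoLocallyUniformlyOn f' g' l s) (hf : ∀ n, ∀ y ∈ s, HasFDerivAt (f n) (f' n y) y)
    {x₀ x : E} (hx₀ : x₀ ∈ s) (hx : x ∈ s) (hfg : Cauchy (map (f · x₀) l)) :
    Cauchy (map (f · x) l) := by
  refine h's.induction₂' (fun y z => Cauchy (map (f · y) l) → Cauchy (map (f · z) l))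
    (fun y hy => ?_) (fun _ _ _ _ _ _ hyz hzw h => hzw (hyz h)) hx₀ hx hfg
  have htfae := (tendstoLocallyUniformlyOn_TFAE f' g' l hs).out 0 2
  obtain ⟨v, hv, hunif⟩ := htfae.mp hf' y hy
  rw [hs.nhdsWithin_eq hy] at hv
  obtain ⟨r, hr, hball⟩ := Metric.mem_nhds_iff.mp (inter_mem hv (hs.mem_nhds hy))
  have hcauchy {z w : E} (hz : z ∈ Metric.ball y r) (hw : w ∈ Metric.ball y r) :
      Cauchy (map (f · z) l) → Cauchy (map (f · w) l) :=
    cauchy_map_of_uniformCauchySeqOn_fderiv Metric.isOpen_ball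
      (convex_ball y r).isPreconnected
      (hunif.mono (hball.trans inter_subset_left)).uniformCauchySeqOn
      (fun n z hz => hf n z (hball hz).2) hz hw
  filter_upwards [nhdsWithin_le_nhds (Metric.ball_mem_nhds y hr)] with z hz
  exact ⟨hcauchy (Metric.mem_ball_self hr) hz, hcauchy hz (Metric.mem_ball_self hr)⟩

theorem exists_hasFDerivAt_of_tendstoLocallyUniformlyOn_fderiv [CompleteSpace G] (hs : IsOpen s)
    (h's : IsPreconnected s) (hf' : TendstoLocallyUniformlyOn f' g' l s)
    (hf : ∀ n, ∀ y ∈ s, HasFDerivAt (f n) (f' n y) y) {x₀ : E} (hx₀ : x₀ ∈ s)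
    (hfg : Cauchy (map (f · x₀) l)) :
    ∃ F : E → G, (∀ x ∈ s, Tendsto (f · x) l (𝓝 (F x))) ∧ ∀ x ∈ s, HasFDerivAt F (g' x) x := by
  have : NeBot l := (cauchy_map_iff.1 hfg).1
  have hlim : ∀ x ∈ s, Tendsto (f · x) l (𝓝 (limUnder l (f · x))) := fun x hx =>
    tendsto_nhds_limUnder <| cauchy_map_iff_exists_tendsto.1 <|
      cauchy_map_of_tendstoLocallyUniformlyOn_fderiv hs h's hf' hf hx₀ hx hfg
  exact ⟨_, hlim, fun x hx => hasFDerivAt_of_tendstoLocallyUniformlyOn hs hf' hf hlim hx⟩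

end LimitsOfDerivatives

theorem limit_of_gradients_of_strongly_convex_general {d : ℕ}
    (U : Set (EuclideanSpace ℝ (Fin d))) (hUopen : IsOpen U)
    (L : ℝ≥0) (ℓ : ℝ)
    (g : ℕ → EuclideanSpace ℝ (Fin d) → EuclideanSpace ℝ (Fin d))
    (φ : ℕ → EuclideanSpace ℝ (Fin d) → ℝ)
    (hlip : ∀ n, LipschitzOnWith L (g n) U)
    (hC1 : ∀ n, ContDiffOn ℝ 1 (φ n) U)
    (hsc : ∀ n, StrongConvexOn U ℓ (φ n))
    (hgrad : ∀ n, ∀ x ∈ U, g n x = gradient (φ n) x)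
    (glim : EuclideanSpace ℝ (Fin d) → EuclideanSpace ℝ (Fin d))
    (hconv : TendstoLocallyUniformlyOn g glim atTop U) :
    LipschitzOnWith L glim U ∧
    ∃ ψ : EuclideanSpace ℝ (Fin d) → ℝ, ContDiffOn ℝ 1 ψ U ∧
      StrongConvexOn U ℓ ψ ∧ ∀ x ∈ U, glim x = gradient ψ x := by
  let toDual := InnerProductSpace.toDual ℝ (EuclideanSpace ℝ (Fin d))
  have hglip : LipschitzOnWith L glim U :=
    .of_tendsto (.of_forall hlip) fun _ hx => hconv.tendsto_at hx
  refine ⟨hglip, ?_⟩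
  rcases U.eq_empty_or_nonempty with rfl | ⟨x₀, hx₀⟩
  · exact ⟨0, by simp, ⟨convex_empty, by simp⟩, by simp⟩
  have hφ : ∀ n, ∀ x ∈ U, HasFDerivAt (fun y => φ n y - φ n x₀) (toDual (g n x)) x := by
    intro n x hx
    rw [hgrad n x hx, ← hasGradientAt_iff_hasFDerivAt]
    exact (((hC1 n).differentiableOn one_ne_zero x hx).differentiableAt
      (hUopen.mem_nhds hx)).hasGradientAt.sub_const _
  have hdual : TendstoLocallyUniformlyOn (fun n x => toDual (g n x)) (fun x => toDual (glim x))
      atTop U :=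
    toDual.isometry.uniformContinuous.comp_tendstoLocallyUniformlyOn hconv
  obtain ⟨ψ, hψlim, hψ⟩ := exists_hasFDerivAt_of_tendstoLocallyUniformlyOn_fderiv hUopen
    (hsc 0).1.isPreconnected hdual hφ hx₀ (by simpa using tendsto_const_nhds.cauchy_map)
  refine ⟨ψ, contDiffOn_one_of_hasFDerivAt hUopen hψ
      (toDual.continuous.comp_continuousOn hglip.continuousOn),
    .of_tendsto (.of_forall fun n => ?_) hψlim,
    fun x hx => (hasGradientAt_iff_hasFDerivAt.mpr (hψ x hx)).gradient.symm⟩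
  simpa [Pi.sub_def] using
    (hsc n).sub (uniformConcaveOn_zero.mpr (concaveOn_const (φ n x₀) (hsc n).1))

/-- Closedness under local uniform limits of L-Lipschitz gradients of C¹
ℓ-strongly convex potentials on an open arc-connected set U ⊂ ℝᵈ. -/
theorem limit_of_gradients_of_strongly_convex {d : ℕ}
    (U : Set (EuclideanSpace ℝ (Fin d))) (hUopen : IsOpen U)
    (hUconn : LipArcConnected U) (L : ℝ≥0) (ℓ : ℝ) (hℓ : 0 ≤ ℓ)
    (g : ℕ → EuclideanSpace ℝ (Fin d) → EuclideanSpace ℝ (Fin d))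
    (φ : ℕ → EuclideanSpace ℝ (Fin d) → ℝ)
    (hlip : ∀ n, LipschitzOnWith L (g n) U)
    (hC1 : ∀ n, ContDiffOn ℝ 1 (φ n) U)
    (hsc : ∀ n, StrongConvexOn U ℓ (φ n))
    (hgrad : ∀ n, ∀ x ∈ U, g n x = gradient (φ n) x)
    (glim : EuclideanSpace ℝ (Fin d) → EuclideanSpace ℝ (Fin d))
    (hconv : TendstoLocallyUniformlyOn g glim atTop U) :
    LipschitzOnWith L glim U ∧
    ∃ ψ : EuclideanSpace ℝ (Fin d) → ℝ, ContDiffOn ℝ 1 ψ U ∧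
      StrongConvexOn U ℓ ψ ∧ ∀ x ∈ U, glim x = gradient ψ x :=
  limit_of_gradients_of_strongly_convex_general U hUopen L ℓ g φ hlip hC1 hsc hgrad glim hconv
end

section
/- Let μ = U([-1,1]) and ν = ½U([-2,-1]) + ½U([1,2]). For ε ∈ (0,1), define g_ε(x) = x − 1 for x ≤ −ε, g_ε(x) = ((1+ε)/ε)x for x ∈ [−ε, ε], and g_ε(x) = x + 1 for x ≥ ε. Then g_ε#μ = ((1−ε)/2)U([−2, −1−ε]) + ε U([−1−ε, 1+ε]) + ((1−ε)/2)U([1+ε, 2]), and g_ε#μ converges weakly to ν as ε → 0; in particular W₂²(g_ε#μ, ν) → 0. -/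
open Set MeasureTheory Filter
open scoped ENNReal Topology BoundedContinuousFunction

/-- Squared 2-Wasserstein cost between measures on ℝ (infimum over couplings of
the expected squared difference). -/
noncomputable def W2sq (ρ₁ ρ₂ : MeasureTheory.Measure ℝ) : ℝ≥0∞ :=
  ⨅ π ∈ {π : MeasureTheory.Measure (ℝ × ℝ) |
      π.map Prod.fst = ρ₁ ∧ π.map Prod.snd = ρ₂},
    ∫⁻ q, ENNReal.ofReal ((q.1 - q.2) ^ 2) ∂π

/-- The uniform probability measure on [-1,1]. -/
noncomputable def muUnif : MeasureTheory.Measure ℝ :=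
  (2 : ℝ≥0∞)⁻¹ • MeasureTheory.volume.restrict (Set.Icc (-1 : ℝ) 1)

/-- The measure ½ U([-2,-1]) + ½ U([1,2]). -/
noncomputable def nuTarget : MeasureTheory.Measure ℝ :=
  (2 : ℝ≥0∞)⁻¹ • MeasureTheory.volume.restrict (Set.Icc (-2 : ℝ) (-1)) +
  (2 : ℝ≥0∞)⁻¹ • MeasureTheory.volume.restrict (Set.Icc (1 : ℝ) 2)

/-- The continuous approximation g_ε of the discontinuous transport map. -/
noncomputable def gEps (ε : ℝ) : ℝ → ℝ := fun x =>
  if x ≤ -ε then x - 1 else if x ≤ ε then ((1 + ε) / ε) * x else x + 1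

/-!
Away from the window `(-ε, ε)` the map `g_ε` agrees with the monotone map `g₀ x = x ∓ 1`,
which pushes `μ` to `ν`; inside the window `g_ε x - g₀ x = x / ε ± 1` has modulus at most `1`.
So `(g_ε, g₀)#μ` couples `g_ε#μ` with `ν` at cost at most `μ(-ε, ε) ≤ ε`, and dominated
convergence gives the weak limit. The formula for `g_ε#μ` comes from cutting `[-1, 1]` at `±ε`,
where `g_ε` is affine on each piece.
-/

noncomputable def g0 : ℝ → ℝ := fun x => if x ≤ 0 then x - 1 else x + 1

lemma measurable_g0 : Measurable g0 :=
  Measurable.ite measurableSet_Iic (measurable_id.sub_const 1) (measurable_id.add_const 1)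

lemma measurable_gEps (ε : ℝ) : Measurable (gEps ε) :=
  Measurable.ite measurableSet_Iic (measurable_id.sub_const 1)
    (Measurable.ite measurableSet_Iic (measurable_id.const_mul _) (measurable_id.add_const 1))

lemma Real.map_volume_affine {k : ℝ} (hk : k ≠ 0) (b : ℝ) :
    volume.map (fun t => k * t + b) = ENNReal.ofReal |k⁻¹| • volume := by
  change volume.map ((· + b) ∘ (k * ·)) = _
  rw [← Measure.map_map (measurable_add_const b) (measurable_const_mul k),
    Real.map_volume_mul_left hk, Measure.map_smul, map_add_right_eq_self]

lemma Real.map_volume_restrict_Icc_affine {k : ℝ} (hk : 0 < k) (b x y : ℝ) :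
    (volume.restrict (Icc x y)).map (fun t => k * t + b) =
      ENNReal.ofReal k⁻¹ • volume.restrict (Icc (k * x + b) (k * y + b)) := by
  have hemb : MeasurableEmbedding (fun t => k * t + b) :=
    ((Homeomorph.mulLeft₀ k hk.ne').trans (Homeomorph.addRight b)).measurableEmbedding
  have hpre : (fun t => k * t + b) ⁻¹' Icc (k * x + b) (k * y + b) = Icc x y := by
    ext t
    simp only [mem_preimage, mem_Icc, add_le_add_iff_right, mul_le_mul_iff_right₀ hk]
  rw [← hpre, ← hemb.restrict_map, Real.map_volume_affine hk.ne', abs_of_pos (inv_pos.2 hk),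
    Measure.restrict_smul]

lemma Real.map_volume_restrict_Icc_of_eqOn {g : ℝ → ℝ} {k b x y : ℝ} (hk : 0 < k)
    (hg : EqOn g (fun t => k * t + b) (Ioo x y)) :
    (volume.restrict (Icc x y)).map g =
      ENNReal.ofReal k⁻¹ • volume.restrict (Icc (k * x + b) (k * y + b)) := by
  rw [← Real.map_volume_restrict_Icc_affine hk, ← Measure.restrict_congr_set Ioo_ae_eq_Icc]
  exact Measure.map_congr (ae_restrict_of_forall_mem measurableSet_Ioo hg)

lemma Real.volume_restrict_Icc_add_Icc {a b c : ℝ} (hab : a ≤ b) (hbc : b ≤ c) :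
    volume.restrict (Icc a b) + volume.restrict (Icc b c) = volume.restrict (Icc a c) := by
  rw [← Measure.restrict_union_add_inter _ measurableSet_Icc, Icc_union_Icc_eq_Icc hab hbc,
    Icc_inter_Icc_eq_singleton hab hbc, Measure.restrict_singleton, Real.volume_singleton,
    zero_smul, add_zero]

lemma muUnif_eq : muUnif = ENNReal.ofReal 2⁻¹ • volume.restrict (Icc (-1) 1) := by
  rw [muUnif, ENNReal.ofReal_inv_of_pos two_pos, ENNReal.ofReal_ofNat]

instance : IsProbabilityMeasure muUnif := by
  constructor
  rw [muUnif_eq, Measure.smul_apply, Measure.restrict_apply_univ, Real.volume_Icc, smul_eq_mul,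
    ← ENNReal.ofReal_mul (by norm_num)]
  norm_num

lemma map_g0 : muUnif.map g0 = nuTarget := by
  have hneg : EqOn g0 (fun t => 1 * t + -1) (Ioo (-1) 0) := fun t ht => by
    simp [g0, ht.2.le, sub_eq_add_neg]
  have hpos : EqOn g0 (fun t => 1 * t + 1) (Ioo 0 1) := fun t ht => by
    simp [g0, not_le.2 ht.1]
  rw [muUnif, ← Real.volume_restrict_Icc_add_Icc (by norm_num : (-1 : ℝ) ≤ 0) zero_le_one,
    Measure.map_smul, Measure.map_add _ _ measurable_g0,
    Real.map_volume_restrict_Icc_of_eqOn one_pos hneg,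
    Real.map_volume_restrict_Icc_of_eqOn one_pos hpos, nuTarget]
  norm_num

lemma map_gEps {ε : ℝ} (hε : 0 < ε) (hε1 : ε < 1) :
    muUnif.map (gEps ε) =
      ENNReal.ofReal ((1 - ε) / 2) •
        ((ENNReal.ofReal (1 - ε))⁻¹ • volume.restrict (Icc (-2 : ℝ) (-(1 + ε)))) +
      ENNReal.ofReal ε •
        ((ENNReal.ofReal (2 * (1 + ε)))⁻¹ • volume.restrict (Icc (-(1 + ε)) (1 + ε))) +
      ENNReal.ofReal ((1 - ε) / 2) •
        ((ENNReal.ofReal (1 - ε))⁻¹ • volume.restrict (Icc (1 + ε) (2 : ℝ))) := by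
  have hleft : EqOn (gEps ε) (fun t => 1 * t + -1) (Ioo (-1) (-ε)) := fun t ht => by
    simp [gEps, ht.2.le, sub_eq_add_neg]
  have hmid : EqOn (gEps ε) (fun t => (1 + ε) / ε * t + 0) (Ioo (-ε) ε) := fun t ht => by
    simp [gEps, not_le.2 ht.1, ht.2.le]
  have hright : EqOn (gEps ε) (fun t => 1 * t + 1) (Ioo ε 1) := fun t ht => by
    simp [gEps, not_le.2 ht.1, not_le.2 ((neg_lt_self hε).trans ht.1)]
  rw [muUnif_eq, ← Real.volume_restrict_Icc_add_Icc (by linarith : (-1 : ℝ) ≤ -ε) (by linarith),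
    ← Real.volume_restrict_Icc_add_Icc (neg_le_self hε.le) hε1.le, ← add_assoc,
    Measure.map_smul, Measure.map_add _ _ (measurable_gEps ε),
    Measure.map_add _ _ (measurable_gEps ε),
    Real.map_volume_restrict_Icc_of_eqOn one_pos hleft,
    Real.map_volume_restrict_Icc_of_eqOn (by positivity) hmid,
    Real.map_volume_restrict_Icc_of_eqOn one_pos hright, smul_add, smul_add]
  simp only [smul_smul, ← div_eq_mul_inv, ← ENNReal.ofReal_mul (inv_nonneg.2 zero_le_two),
    ← ENNReal.ofReal_div_of_pos (sub_pos.2 hε1),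
    ← ENNReal.ofReal_div_of_pos (by positivity : (0 : ℝ) < 2 * (1 + ε))]
  have hside : (1 - ε) / 2 / (1 - ε) = 2⁻¹ / 1 := by
    field_simp [(sub_pos.2 hε1).ne']
  have hmiddle : ε / (2 * (1 + ε)) = 2⁻¹ / ((1 + ε) / ε) := by field_simp
  rw [hside, hmiddle, show (1 + ε) / ε * -ε + 0 = -(1 + ε) by field_simp; ring,
    show (1 + ε) / ε * ε + 0 = 1 + ε by field_simp; ring]
  ring_nf

lemma tendsto_integral_map_of_ae_tendsto {α E ι : Type*} [MeasurableSpace α] [TopologicalSpace E]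
    [MeasurableSpace E] [OpensMeasurableSpace E] {μ : Measure α} [IsFiniteMeasure μ]
    {l : Filter ι} [l.IsCountablyGenerated] {g : ι → α → E} {g₀ : α → E}
    (hg : ∀ i, Measurable (g i)) (hg₀ : Measurable g₀)
    (hlim : ∀ᵐ x ∂μ, Tendsto (fun i => g i x) l (𝓝 (g₀ x))) (φ : E →ᵇ ℝ) :
    Tendsto (fun i => ∫ y, φ y ∂μ.map (g i)) l (𝓝 (∫ y, φ y ∂μ.map g₀)) := by
  have hmap : ∀ i, ∫ y, φ y ∂μ.map (g i) = ∫ x, φ (g i x) ∂μ := fun i =>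
    integral_map (hg i).aemeasurable φ.continuous.aestronglyMeasurable
  simp only [hmap, integral_map hg₀.aemeasurable φ.continuous.aestronglyMeasurable]
  refine tendsto_integral_filter_of_dominated_convergence (fun _ => ‖φ‖)
    (Eventually.of_forall fun i => (φ.continuous.measurable.comp (hg i)).aestronglyMeasurable)
    (Eventually.of_forall fun i => Eventually.of_forall fun x => φ.norm_coe_le_norm _)
    (integrable_const _) ?_
  filter_upwards [hlim] with x hx
  exact (φ.continuous.tendsto _).comp hx

lemma W2sq_map_le_lintegral {α : Type*} [MeasurableSpace α] (μ : Measure α) {f g : α → ℝ}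
    (hf : Measurable f) (hg : Measurable g) :
    W2sq (μ.map f) (μ.map g) ≤ ∫⁻ x, ENNReal.ofReal ((f x - g x) ^ 2) ∂μ := by
  have hfg : Measurable fun x => (f x, g x) := hf.prodMk hg
  have hcoupling : (μ.map fun x => (f x, g x)).map Prod.fst = μ.map f ∧
      (μ.map fun x => (f x, g x)).map Prod.snd = μ.map g :=
    ⟨by rw [Measure.map_map measurable_fst hfg]; rfl,
      by rw [Measure.map_map measurable_snd hfg]; rfl⟩
  unfold W2sq
  refine (iInf₂_le (μ.map fun x => (f x, g x)) hcoupling).trans_eq ?_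
  exact lintegral_map (((measurable_fst.sub measurable_snd).pow_const 2).ennreal_ofReal) hfg

lemma gEps_eq_g0_of_le_abs {ε x : ℝ} (hε : 0 < ε) (hx : ε ≤ |x|) : gEps ε x = g0 x := by
  rcases le_abs'.1 hx with hneg | hpos
  · simp [gEps, g0, hneg, hneg.trans (neg_nonpos.2 hε.le)]
  · rcases hpos.eq_or_lt with rfl | hlt
    · simp [gEps, g0, hε.ne', not_le.2 hε, not_le.2 (neg_lt_self hε)]
      ring
    · simp [gEps, g0, not_le.2 hlt, not_le.2 (hε.trans hlt),
        not_le.2 ((neg_lt_self hε).trans hlt)]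

lemma abs_gEps_sub_g0_le_one {ε : ℝ} (hε : 0 < ε) (x : ℝ) : |gEps ε x - g0 x| ≤ 1 := by
  by_cases hx : ε ≤ |x|
  · simp [gEps_eq_g0_of_le_abs hε hx]
  obtain ⟨hlo, hhi⟩ := abs_lt.1 (not_le.1 hx)
  have hslope : (1 + ε) / ε * x = x / ε + x := by field_simp
  have hlo' : -1 < x / ε := by rwa [lt_div_iff₀ hε, neg_one_mul]
  have hhi' : x / ε < 1 := by rwa [div_lt_iff₀ hε, one_mul]
  simp only [gEps, g0, not_le.2 hlo, hhi.le, if_false, if_true, hslope]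
  split_ifs with hsign
  · have : x / ε ≤ 0 := div_nonpos_of_nonpos_of_nonneg hsign hε.le
    rw [abs_le]; constructor <;> linarith
  · have : 0 < x / ε := div_pos (not_le.1 hsign) hε
    rw [abs_le]; constructor <;> linarith

lemma tendsto_gEps_nhdsGT {x : ℝ} (hx : x ≠ 0) :
    Tendsto (fun ε => gEps ε x) (𝓝[>] 0) (𝓝 (g0 x)) := by
  refine tendsto_const_nhds.congr' ?_
  filter_upwards [self_mem_nhdsWithin,
    nhdsWithin_le_nhds (Iio_mem_nhds (abs_pos.2 hx))] with ε hε hεx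
  exact (gEps_eq_g0_of_le_abs hε hεx.le).symm

lemma W2sq_map_gEps_le {ε : ℝ} (hε : 0 < ε) :
    W2sq (muUnif.map (gEps ε)) nuTarget ≤ ENNReal.ofReal ε := by
  have hcost : ∀ x, ENNReal.ofReal ((gEps ε x - g0 x) ^ 2) ≤ (Ioo (-ε) ε).indicator 1 x := by
    intro x
    by_cases hx : x ∈ Ioo (-ε) ε
    · rw [indicator_of_mem hx, Pi.one_apply, ENNReal.ofReal_le_one, ← sq_abs]
      exact pow_le_one₀ (abs_nonneg _) (abs_gEps_sub_g0_le_one hε x)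
    · rw [gEps_eq_g0_of_le_abs hε (not_lt.1 fun h => hx (abs_lt.1 h))]
      simp
  calc W2sq (muUnif.map (gEps ε)) nuTarget
      ≤ ∫⁻ x, ENNReal.ofReal ((gEps ε x - g0 x) ^ 2) ∂muUnif := by
        rw [← map_g0]; exact W2sq_map_le_lintegral _ (measurable_gEps ε) measurable_g0
    _ ≤ ∫⁻ x, (Ioo (-ε) ε).indicator 1 x ∂muUnif := lintegral_mono hcost
    _ = muUnif (Ioo (-ε) ε) := lintegral_indicator_one measurableSet_Ioo
    _ ≤ ENNReal.ofReal 2⁻¹ * volume (Ioo (-ε) ε) := by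
        rw [muUnif_eq, Measure.smul_apply, smul_eq_mul]
        gcongr
        exact Measure.restrict_le_self
    _ = ENNReal.ofReal ε := by
        rw [Real.volume_Ioo, ← ENNReal.ofReal_mul (by norm_num)]
        ring_nf

/-- The image g_ε#μ equals the stated mixture of uniform measures, converges
weakly to ν as ε → 0, and W₂²(g_ε#μ, ν) → 0. -/
theorem gEps_pushforward_and_convergence :
    (∀ ε ∈ Set.Ioo (0 : ℝ) 1,
      MeasureTheory.Measure.map (gEps ε) muUnif =
        ENNReal.ofReal ((1 - ε) / 2) •
          ((ENNReal.ofReal (1 - ε))⁻¹ •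
            MeasureTheory.volume.restrict (Set.Icc (-2 : ℝ) (-(1 + ε)))) +
        ENNReal.ofReal ε •
          ((ENNReal.ofReal (2 * (1 + ε)))⁻¹ •
            MeasureTheory.volume.restrict (Set.Icc (-(1 + ε)) (1 + ε))) +
        ENNReal.ofReal ((1 - ε) / 2) •
          ((ENNReal.ofReal (1 - ε))⁻¹ •
            MeasureTheory.volume.restrict (Set.Icc (1 + ε) (2 : ℝ)))) ∧
    (∀ f : ℝ →ᵇ ℝ,
      Tendsto (fun ε => ∫ x, f x ∂(MeasureTheory.Measure.map (gEps ε) muUnif))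
        (𝓝[Set.Ioo (0 : ℝ) 1] 0) (𝓝 (∫ x, f x ∂nuTarget))) ∧
    Tendsto (fun ε => W2sq (MeasureTheory.Measure.map (gEps ε) muUnif) nuTarget)
      (𝓝[Set.Ioo (0 : ℝ) 1] 0) (𝓝 0) := by
  have hfilter : 𝓝[Ioo (0 : ℝ) 1] 0 ≤ 𝓝[>] 0 := nhdsWithin_mono _ Ioo_subset_Ioi_self
  refine ⟨fun ε hε => map_gEps hε.1 hε.2, fun φ => ?_, ?_⟩
  · have hae : ∀ᵐ x ∂muUnif, Tendsto (fun ε => gEps ε x) (𝓝[>] 0) (𝓝 (g0 x)) := by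
      have hne : ∀ᵐ x ∂muUnif, x ≠ 0 :=
        Measure.ae_smul_measure (ae_restrict_of_ae (Measure.ae_ne volume 0)) _
      filter_upwards [hne] with x hx using tendsto_gEps_nhdsGT hx
    rw [← map_g0]
    exact (tendsto_integral_map_of_ae_tendsto measurable_gEps measurable_g0 hae φ).mono_left
      hfilter
  · have hbound : Tendsto ENNReal.ofReal (𝓝 0) (𝓝 0) :=
      ENNReal.continuous_ofReal.tendsto' 0 0 ENNReal.ofReal_zero
    refine tendsto_of_tendsto_of_tendsto_of_le_of_le' tendsto_const_nhds
      (hbound.mono_left nhdsWithin_le_nhds) (Eventually.of_forall fun _ => zero_le) ?_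
    filter_upwards [self_mem_nhdsWithin] with ε hε using W2sq_map_gEps_le hε.1
end

section
/- Let μ, ν ∈ P₂(ℝ) and let G be a class of non-decreasing functions g: ℝ → ℝ with g#μ ∈ P₂(ℝ). For every g ∈ G, W₂²(g#μ, ν) = ‖g − π̄*‖²_{L²(μ)} + m₂(ν) − m₂(π̄*#μ), where π* = (F_μ⁻, F_ν⁻)#L_{[0,1]} is the (unique) quadratic-cost optimal plan between μ and ν and π̄* its barycentric projection. Consequently, argmin_{g∈G} W₂²(g#μ, ν) = argmin_{g∈G} ‖g − π̄*‖²_{L²(μ)}. -/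
/-!
In dimension one the comonotone coupling is optimal for the quadratic cost: all couplings of two
measures have the same second moments, and by Hoeffding's identity `∫ x y dπ` is an integral of the
quadrant masses `π((s, ∞) × (t, ∞))`, which the comonotone coupling maximises. As `g` is
non-decreasing, the comonotone coupling of `g#μ` and `ν` is `(g × id)#π*`, so
`W₂²(g#μ, ν) = ∫ (g x - y)² dπ*`. Since `π̄*(x) = E[y | x]`, Pythagoras in `L²(π*)` splits this as
`‖g - π̄*‖²_{L²(μ)} + m₂(ν) - m₂(π̄*#μ)`, where the last two terms do not depend on `g`.
-/

open Set MeasureTheory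
open scoped ENNReal

/-- The optimal transport plan for the quadratic cost between two measures on ℝ:
π* = (F_μ⁻, F_ν⁻)#Leb_{[0,1]}. -/
noncomputable def OTplan1D (μ ν : MeasureTheory.Measure ℝ) :
    MeasureTheory.Measure (ℝ × ℝ) :=
  MeasureTheory.Measure.map (fun p => (quantileFn μ p, quantileFn ν p))
    (MeasureTheory.volume.restrict (Set.Icc (0:ℝ) 1))

open Filter ProbabilityTheory

section Quantile

variable (ρ : Measure ℝ) [IsProbabilityMeasure ρ]

lemma quantileFn_eq_sInf_cdf (p : ℝ) : quantileFn ρ p = sInf {x | p ≤ cdf ρ x} := by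
  simp only [quantileFn, cdf_eq_real, measureReal_def]

lemma quantileFn_le_iff {p x : ℝ} (hp : p ∈ Ioo 0 1) : quantileFn ρ p ≤ x ↔ p ≤ cdf ρ x := by
  have hne : {x | p ≤ cdf ρ x}.Nonempty :=
    (((tendsto_cdf_atTop ρ).eventually_const_lt hp.2).exists).imp fun _ => le_of_lt
  obtain ⟨x₀, hx₀⟩ := eventually_atBot.1 ((tendsto_cdf_atBot ρ).eventually_lt_const hp.1)
  have hbdd : BddBelow {x | p ≤ cdf ρ x} :=
    ⟨x₀, fun x hx => le_of_not_gt fun h => (hx₀ x h.le).not_ge hx⟩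
  rw [quantileFn_eq_sInf_cdf]
  refine ⟨fun h => ?_, fun h => csInf_le hbdd h⟩
  have hright : ∀ y > x, p ≤ cdf ρ y := fun y hy => by
    obtain ⟨z, hz, hzy⟩ := exists_lt_of_csInf_lt hne (h.trans_lt hy)
    exact hz.trans (monotone_cdf ρ hzy.le)
  exact ge_of_tendsto (((cdf ρ).right_continuous x).mono Ioi_subset_Ici_self)
    (eventually_nhdsWithin_of_forall hright)

lemma monotoneOn_quantileFn : MonotoneOn (quantileFn ρ) (Ioo 0 1) := fun _ hp _ hq hpq =>
  (quantileFn_le_iff ρ hp).2 (hpq.trans ((quantileFn_le_iff ρ hq).1 le_rfl))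

lemma aemeasurable_quantileFn : AEMeasurable (quantileFn ρ) (volume.restrict (Ioo 0 1)) :=
  aemeasurable_restrict_of_monotoneOn measurableSet_Ioo (monotoneOn_quantileFn ρ)

theorem map_quantileFn : (volume.restrict (Ioo 0 1)).map (quantileFn ρ) = ρ := by
  refine Measure.ext_of_Iic _ _ fun x => ?_
  have hpre : quantileFn ρ ⁻¹' Iic x ∩ Ioo 0 1 = Iic (cdf ρ x) ∩ Ioo 0 1 :=
    Set.ext fun p => and_congr_left fun hp => quantileFn_le_iff ρ hp
  have hcdf : Ioc 0 1 ∩ Iic (cdf ρ x) = Ioc 0 (cdf ρ x) := by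
    rw [Ioc_inter_Iic, min_eq_right (cdf_le_one ρ x)]
  have hae : (Ioo 0 1 ∩ Iic (cdf ρ x) : Set ℝ) =ᵐ[volume] (Ioc 0 1 ∩ Iic (cdf ρ x) : Set ℝ) :=
    ae_eq_set_inter Ioo_ae_eq_Ioc (ae_eq_refl _)
  rw [Measure.map_apply_of_aemeasurable (aemeasurable_quantileFn ρ) measurableSet_Iic,
    Measure.restrict_apply' measurableSet_Ioo, hpre, inter_comm, measure_congr hae, hcdf,
    Real.volume_Ioc, sub_zero, cdf_eq_real, measureReal_def,
    ENNReal.ofReal_toReal (measure_ne_top ρ _)]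

end Quantile

lemma MonotoneOn.inter_preimage_Ioi_total {α β γ : Type*} [LinearOrder α] [Preorder β]
    [Preorder γ] {S : Set α} {f : α → β} {g : α → γ} (hf : MonotoneOn f S)
    (hg : MonotoneOn g S) (b : β) (c : γ) :
    S ∩ f ⁻¹' Ioi b ⊆ S ∩ g ⁻¹' Ioi c ∨ S ∩ g ⁻¹' Ioi c ⊆ S ∩ f ⁻¹' Ioi b := by
  refine or_iff_not_imp_left.2 fun h => ?_
  obtain ⟨x, ⟨hxS, hfx⟩, hx⟩ := not_subset.1 h
  rintro y ⟨hyS, hgy⟩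
  refine ⟨hyS, ?_⟩
  rcases le_total x y with hxy | hyx
  · exact hfx.trans_le (hf hxS hyS hxy)
  · exact absurd ⟨hxS, hgy.trans_le (hg hyS hxS hyx)⟩ hx

/-- Fréchet–Hoeffding: the superlevel sets of `h₁` and `h₂` in `S` are nested, so the comonotone
coupling gives each quadrant the smaller of its two marginal masses. -/
theorem measure_Ioi_prod_Ioi_le_map_prodMk {μ : Measure ℝ} {S : Set ℝ} (hS : MeasurableSet S)
    {h₁ h₂ : ℝ → ℝ} (hm₁ : MonotoneOn h₁ S) (hm₂ : MonotoneOn h₂ S) {π : Measure (ℝ × ℝ)}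
    (hπ₁ : π.map Prod.fst = (μ.restrict S).map h₁) (hπ₂ : π.map Prod.snd = (μ.restrict S).map h₂)
    (s t : ℝ) :
    π (Ioi s ×ˢ Ioi t) ≤ (μ.restrict S).map (fun p => (h₁ p, h₂ p)) (Ioi s ×ˢ Ioi t) := by
  have hae₁ := aemeasurable_restrict_of_monotoneOn (μ := μ) hS hm₁
  have hae₂ := aemeasurable_restrict_of_monotoneOn (μ := μ) hS hm₂
  have hle₁ : π (Ioi s ×ˢ Ioi t) ≤ μ (S ∩ h₁ ⁻¹' Ioi s) :=
    (measure_mono (prod_subset_preimage_fst _ _)).trans_eq <| by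
      rw [← Measure.map_apply measurable_fst measurableSet_Ioi, hπ₁,
        Measure.map_apply_of_aemeasurable hae₁ measurableSet_Ioi, Measure.restrict_apply' hS,
        inter_comm]
  have hle₂ : π (Ioi s ×ˢ Ioi t) ≤ μ (S ∩ h₂ ⁻¹' Ioi t) :=
    (measure_mono (prod_subset_preimage_snd _ _)).trans_eq <| by
      rw [← Measure.map_apply measurable_snd measurableSet_Ioi, hπ₂,
        Measure.map_apply_of_aemeasurable hae₂ measurableSet_Ioi, Measure.restrict_apply' hS,
        inter_comm]
  have hquad : h₁ ⁻¹' Ioi s ∩ h₂ ⁻¹' Ioi t ∩ S = (S ∩ h₁ ⁻¹' Ioi s) ∩ (S ∩ h₂ ⁻¹' Ioi t) := by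
    ext; simp only [mem_inter_iff]; tauto
  rw [Measure.map_apply_of_aemeasurable (hae₁.prodMk hae₂)
      (measurableSet_Ioi.prod measurableSet_Ioi), Measure.restrict_apply' hS, mk_preimage_prod,
    hquad]
  rcases hm₁.inter_preimage_Ioi_total hm₂ s t with h | h
  · rwa [inter_eq_left.2 h]
  · rwa [inter_eq_right.2 h]

section Hoeffding

noncomputable def stepKernel (x s : ℝ) : ℝ :=
  (if s < x then 1 else 0) - (if s < 0 then 1 else 0)

lemma measurable_stepKernel : Measurable (Function.uncurry stepKernel) :=
  (Measurable.ite (measurableSet_lt measurable_snd measurable_fst) measurable_const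
    measurable_const).sub
    (Measurable.ite (measurableSet_lt measurable_snd measurable_const) measurable_const
      measurable_const)

lemma stepKernel_eq_indicator (x : ℝ) :
    stepKernel x = (Ico 0 x).indicator 1 - (Ico x 0).indicator 1 := by
  ext s
  simp only [stepKernel, Pi.sub_apply, indicator_apply, mem_Ico, Pi.one_apply]
  split_ifs <;> grind

lemma abs_stepKernel (x s : ℝ) :
    |stepKernel x s| = (Ico 0 x).indicator 1 s + (Ico x 0).indicator 1 s := by
  simp only [stepKernel_eq_indicator, Pi.sub_apply, indicator_apply, mem_Ico, Pi.one_apply]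
  split_ifs <;> grind

lemma integrable_indicator_one_Ico (a b : ℝ) : Integrable ((Ico a b).indicator (1 : ℝ → ℝ)) :=
  (integrable_indicator_iff measurableSet_Ico).2 (integrableOn_const (by simp))

lemma integrable_stepKernel (x : ℝ) : Integrable (stepKernel x) := by
  rw [stepKernel_eq_indicator]
  exact (integrable_indicator_one_Ico 0 x).sub (integrable_indicator_one_Ico x 0)

lemma integral_stepKernel (x : ℝ) : ∫ s, stepKernel x s = x := by
  rw [stepKernel_eq_indicator]
  simp only [Pi.sub_apply]
  rw [integral_sub (integrable_indicator_one_Ico 0 x) (integrable_indicator_one_Ico x 0),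
    integral_indicator_one measurableSet_Ico, integral_indicator_one measurableSet_Ico,
    Real.volume_real_Ico, Real.volume_real_Ico, sub_zero, zero_sub, max_zero_sub_eq_self]

lemma integral_abs_stepKernel (x : ℝ) : ∫ s, |stepKernel x s| = |x| := by
  simp only [abs_stepKernel]
  rw [integral_add (integrable_indicator_one_Ico 0 x) (integrable_indicator_one_Ico x 0),
    integral_indicator_one measurableSet_Ico, integral_indicator_one measurableSet_Ico,
    Real.volume_real_Ico, Real.volume_real_Ico, sub_zero, zero_sub,
    max_zero_add_max_neg_zero_eq_abs_self]

lemma abs_stepKernel_le_one (x s : ℝ) : |stepKernel x s| ≤ 1 := by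
  unfold stepKernel
  split_ifs <;> norm_num

/-- Only the first term depends on the joint law of `(x, y)`. -/
lemma stepKernel_mul_stepKernel (x y s t : ℝ) :
    stepKernel x s * stepKernel y t =
      (Ioi s ×ˢ Ioi t).indicator 1 (x, y) - (if t < 0 then 1 else 0) * (Ioi s).indicator 1 x
        - (if s < 0 then 1 else 0) * stepKernel y t := by
  simp only [stepKernel, indicator_apply, mem_prod, mem_Ioi, Pi.one_apply]
  split_ifs <;> grind

lemma integral_stepKernel_mul_stepKernel (κ : Measure (ℝ × ℝ)) [IsFiniteMeasure κ] (s t : ℝ) :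
    ∫ q, stepKernel q.1 s * stepKernel q.2 t ∂κ =
      κ.real (Ioi s ×ˢ Ioi t) - (if t < 0 then 1 else 0) * (κ.map Prod.fst).real (Ioi s)
        - (if s < 0 then 1 else 0) * ∫ y, stepKernel y t ∂(κ.map Prod.snd) := by
  have hK : Measurable (stepKernel · t) :=
    measurable_stepKernel.comp (measurable_id.prodMk measurable_const)
  have hKint : Integrable (stepKernel · t) (κ.map Prod.snd) :=
    .of_bound hK.aestronglyMeasurable 1 (ae_of_all _ fun y => abs_stepKernel_le_one y t)
  have hind : Integrable ((Ioi s).indicator (1 : ℝ → ℝ)) (κ.map Prod.fst) :=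
    (integrable_const (1 : ℝ)).indicator measurableSet_Ioi
  have hquad : Integrable (fun q => (Ioi s ×ˢ Ioi t).indicator (1 : ℝ × ℝ → ℝ) q) κ :=
    (integrable_const (1 : ℝ)).indicator (measurableSet_Ioi.prod measurableSet_Ioi)
  have hfst : Integrable
      (fun q : ℝ × ℝ => (if t < 0 then (1 : ℝ) else 0) * (Ioi s).indicator 1 q.1) κ :=
    (hind.comp_measurable measurable_fst).const_mul (if t < 0 then 1 else 0)
  have hsnd : Integrable
      (fun q : ℝ × ℝ => (if s < 0 then (1 : ℝ) else 0) * stepKernel q.2 t) κ :=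
    (hKint.comp_measurable measurable_snd).const_mul (if s < 0 then 1 else 0)
  simp only [stepKernel_mul_stepKernel, Prod.mk.eta]
  rw [integral_sub (f := fun q => _ - _) (hquad.sub hfst) hsnd, integral_sub hquad hfst,
    integral_const_mul, integral_const_mul,
    integral_indicator_one (measurableSet_Ioi.prod measurableSet_Ioi),
    ← integral_indicator_one measurableSet_Ioi,
    integral_map measurable_fst.aemeasurable hind.aestronglyMeasurable,
    integral_map measurable_snd.aemeasurable hKint.aestronglyMeasurable]

lemma integrable_stepKernel_mul_stepKernel {κ : Measure (ℝ × ℝ)} [SFinite κ]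
    (hκ : Integrable (fun q => q.1 * q.2) κ) :
    Integrable (fun r : (ℝ × ℝ) × (ℝ × ℝ) => stepKernel r.1.1 r.2.1 * stepKernel r.1.2 r.2.2)
      (κ.prod volume) := by
  have hmeas : Measurable
      (fun r : (ℝ × ℝ) × (ℝ × ℝ) => stepKernel r.1.1 r.2.1 * stepKernel r.1.2 r.2.2) :=
    (measurable_stepKernel.comp (measurable_fst.fst.prodMk measurable_snd.fst)).mul
      (measurable_stepKernel.comp (measurable_fst.snd.prodMk measurable_snd.snd))
  rw [integrable_prod_iff hmeas.aestronglyMeasurable]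
  refine ⟨ae_of_all _ fun q => (integrable_stepKernel q.1).mul_prod (integrable_stepKernel q.2),
    hκ.norm.congr (ae_of_all _ fun q => ?_)⟩
  simp only [norm_mul, Real.norm_eq_abs]
  rw [Measure.volume_eq_prod,
    integral_prod_mul (fun s => |stepKernel q.1 s|) (fun t => |stepKernel q.2 t|),
    integral_abs_stepKernel, integral_abs_stepKernel]

/-- Hoeffding's identity: `x = ∫ s, stepKernel x s`, then Fubini. -/
theorem integral_mul_eq_integral_integral_stepKernel {κ : Measure (ℝ × ℝ)} [SFinite κ]
    (hκ : Integrable (fun q => q.1 * q.2) κ) :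
    ∫ q, q.1 * q.2 ∂κ =
      ∫ st : ℝ × ℝ, ∫ q, stepKernel q.1 st.1 * stepKernel q.2 st.2 ∂κ := by
  calc ∫ q, q.1 * q.2 ∂κ
      = ∫ q : ℝ × ℝ, (∫ st : ℝ × ℝ, stepKernel q.1 st.1 * stepKernel q.2 st.2) ∂κ := by
        congr 1 with q
        rw [Measure.volume_eq_prod, integral_prod_mul (fun s => stepKernel q.1 s)
          (fun t => stepKernel q.2 t), integral_stepKernel, integral_stepKernel]
    _ = _ := integral_integral_swap (integrable_stepKernel_mul_stepKernel hκ)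

theorem integral_mul_le_of_measure_Ioi_prod_Ioi_le {π γ : Measure (ℝ × ℝ)} [IsFiniteMeasure π]
    [IsFiniteMeasure γ] (hfst : π.map Prod.fst = γ.map Prod.fst)
    (hsnd : π.map Prod.snd = γ.map Prod.snd)
    (hle : ∀ s t, π (Ioi s ×ˢ Ioi t) ≤ γ (Ioi s ×ˢ Ioi t))
    (hπ : Integrable (fun q => q.1 * q.2) π) (hγ : Integrable (fun q => q.1 * q.2) γ) :
    ∫ q, q.1 * q.2 ∂π ≤ ∫ q, q.1 * q.2 ∂γ := by
  rw [integral_mul_eq_integral_integral_stepKernel hπ,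
    integral_mul_eq_integral_integral_stepKernel hγ]
  refine integral_mono (integrable_stepKernel_mul_stepKernel hπ).integral_prod_right
    (integrable_stepKernel_mul_stepKernel hγ).integral_prod_right fun st => ?_
  simp only [integral_stepKernel_mul_stepKernel, hfst, hsnd]
  gcongr
  exact ENNReal.toReal_mono (measure_ne_top γ _) (hle _ _)

end Hoeffding

section SecondMoments

variable {α : Type*} {mα : MeasurableSpace α} {μ : Measure α}

lemma memLp_two_id {ρ : Measure ℝ} (h : Integrable (fun x => x ^ 2) ρ) :
    MemLp (fun x => x) 2 ρ :=
  (memLp_two_iff_integrable_sq aestronglyMeasurable_id).2 h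

lemma memLp_two_of_map {g : α → ℝ} (hg : AEMeasurable g μ)
    (h : Integrable (fun x => x ^ 2) (μ.map g)) : MemLp g 2 μ :=
  (memLp_two_id h).comp_of_map hg

lemma integral_sub_sq {f h : α → ℝ} (hf : MemLp f 2 μ) (hh : MemLp h 2 μ) :
    ∫ a, (f a - h a) ^ 2 ∂μ = ∫ a, f a ^ 2 ∂μ + ∫ a, h a ^ 2 ∂μ - 2 * ∫ a, f a * h a ∂μ := by
  calc ∫ a, (f a - h a) ^ 2 ∂μ = ∫ a, f a ^ 2 + h a ^ 2 - 2 * (f a * h a) ∂μ := by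
        congr 1 with a; ring
    _ = _ := by
      have hsq : Integrable (fun a => f a ^ 2 + h a ^ 2) μ :=
        hf.integrable_sq.add hh.integrable_sq
      have hmul : Integrable (fun a => 2 * (f a * h a)) μ := (hf.integrable_mul hh).const_mul 2
      rw [integral_sub hsq hmul, integral_add hf.integrable_sq hh.integrable_sq,
        integral_const_mul]

lemma lintegral_ofReal_sub_sq {f h : α → ℝ} (hf : MemLp f 2 μ) (hh : MemLp h 2 μ) :
    ∫⁻ a, ENNReal.ofReal ((f a - h a) ^ 2) ∂μ = ENNReal.ofReal (∫ a, (f a - h a) ^ 2 ∂μ) :=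
  (ofReal_integral_eq_lintegral_ofReal (hf.sub hh).integrable_sq
    (ae_of_all _ fun _ => sq_nonneg _)).symm

/-- Pythagoras in `L²(μ)`: by the pull-out property, `Y - μ[Y|m]` is orthogonal to the
`m`-measurable `f`. -/
theorem integral_sub_sq_of_ae_eq_condExp {m : MeasurableSpace α} (hm : m ≤ mα)
    [IsFiniteMeasure μ] {f Y c : α → ℝ} (hfm : StronglyMeasurable[m] f) (hf : MemLp f 2 μ)
    (hY : MemLp Y 2 μ) (hc : c =ᵐ[μ] μ[Y|m]) :
    ∫ a, (f a - Y a) ^ 2 ∂μ = ∫ a, (f a - c a) ^ 2 ∂μ + ∫ a, Y a ^ 2 ∂μ - ∫ a, c a ^ 2 ∂μ := by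
  have hcL : MemLp c 2 μ := (hY.condExp one_le_two).ae_eq hc.symm
  have : IsFiniteMeasure (μ.trim hm) := isFiniteMeasure_trim hm
  have horth : ∫ a, f a * c a ∂μ = ∫ a, f a * Y a ∂μ :=
    calc ∫ a, f a * c a ∂μ = ∫ a, μ[f * Y|m] a ∂μ :=
          integral_congr_ae ((EventuallyEq.rfl.mul hc).trans
            (condExp_mul_of_stronglyMeasurable_left hfm (hf.integrable_mul hY)
              (hY.integrable one_le_two)).symm)
      _ = ∫ a, f a * Y a ∂μ := integral_condExp hm
  have h₁ : Integrable (fun a => (f a - c a) ^ 2) μ := (hf.sub hcL).integrable_sq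
  have h₂ : Integrable (fun a => (f a - c a) ^ 2 + Y a ^ 2) μ := h₁.add hY.integrable_sq
  have h₃ : Integrable (fun a => (f a - c a) ^ 2 + Y a ^ 2 - c a ^ 2) μ :=
    h₂.sub hcL.integrable_sq
  have hfc : Integrable (fun a => f a * c a) μ := hf.integrable_mul hcL
  have hfY : Integrable (fun a => f a * Y a) μ := hf.integrable_mul hY
  have h₄ : Integrable (fun a => 2 * (f a * c a - f a * Y a)) μ := (hfc.sub hfY).const_mul 2
  calc ∫ a, (f a - Y a) ^ 2 ∂μ
      = ∫ a, ((f a - c a) ^ 2 + Y a ^ 2 - c a ^ 2) + 2 * (f a * c a - f a * Y a) ∂μ := by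
        congr 1 with a; ring
    _ = ∫ a, (f a - c a) ^ 2 ∂μ + ∫ a, Y a ^ 2 ∂μ - ∫ a, c a ^ 2 ∂μ
          + 2 * (∫ a, f a * c a ∂μ - ∫ a, f a * Y a ∂μ) := by
        rw [integral_add h₃ h₄, integral_sub h₂ hcL.integrable_sq,
          integral_add h₁ hY.integrable_sq, integral_const_mul, integral_sub hfc hfY]
    _ = _ := by rw [horth, sub_self, mul_zero, add_zero]

end SecondMoments

section Couplings

def IsCoupling (π : Measure (ℝ × ℝ)) (ρ₁ ρ₂ : Measure ℝ) : Prop :=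
  π.map Prod.fst = ρ₁ ∧ π.map Prod.snd = ρ₂

variable {π : Measure (ℝ × ℝ)} {ρ₁ ρ₂ : Measure ℝ}

lemma IsCoupling.isFiniteMeasure [IsFiniteMeasure ρ₁] (hπ : IsCoupling π ρ₁ ρ₂) :
    IsFiniteMeasure π := by
  have : IsFiniteMeasure (π.map Prod.fst) := hπ.1 ▸ inferInstance
  exact Measure.isFiniteMeasure_of_map measurable_fst.aemeasurable

lemma IsCoupling.memLp_comp_fst (hπ : IsCoupling π ρ₁ ρ₂) {p : ℝ≥0∞} {f : ℝ → ℝ}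
    (hf : MemLp f p ρ₁) : MemLp (fun q => f q.1) p π :=
  (hπ.1 ▸ hf).comp_of_map measurable_fst.aemeasurable

lemma IsCoupling.memLp_comp_snd (hπ : IsCoupling π ρ₁ ρ₂) {p : ℝ≥0∞} {f : ℝ → ℝ}
    (hf : MemLp f p ρ₂) : MemLp (fun q => f q.2) p π :=
  (hπ.2 ▸ hf).comp_of_map measurable_snd.aemeasurable

lemma IsCoupling.integral_comp_fst (hπ : IsCoupling π ρ₁ ρ₂) {f : ℝ → ℝ} (hf : Measurable f) :
    ∫ q, f q.1 ∂π = ∫ x, f x ∂ρ₁ := by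
  rw [← hπ.1, integral_map measurable_fst.aemeasurable hf.aestronglyMeasurable]

lemma IsCoupling.integral_comp_snd (hπ : IsCoupling π ρ₁ ρ₂) {f : ℝ → ℝ} (hf : Measurable f) :
    ∫ q, f q.2 ∂π = ∫ y, f y ∂ρ₂ := by
  rw [← hπ.2, integral_map measurable_snd.aemeasurable hf.aestronglyMeasurable]

lemma IsCoupling.lintegral_cost (hπ : IsCoupling π ρ₁ ρ₂)
    (h₁ : Integrable (fun x => x ^ 2) ρ₁) (h₂ : Integrable (fun x => x ^ 2) ρ₂) :
    ∫⁻ q, ENNReal.ofReal ((q.1 - q.2) ^ 2) ∂π =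
      ENNReal.ofReal (∫ x, x ^ 2 ∂ρ₁ + ∫ y, y ^ 2 ∂ρ₂ - 2 * ∫ q, q.1 * q.2 ∂π) := by
  have hX : MemLp (fun q : ℝ × ℝ => q.1) 2 π := hπ.memLp_comp_fst (memLp_two_id h₁)
  have hY : MemLp (fun q : ℝ × ℝ => q.2) 2 π := hπ.memLp_comp_snd (memLp_two_id h₂)
  rw [lintegral_ofReal_sub_sq hX hY, integral_sub_sq hX hY,
    hπ.integral_comp_fst (f := fun x => x ^ 2) (by fun_prop),
    hπ.integral_comp_snd (f := fun x => x ^ 2) (by fun_prop)]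

/-- All couplings have the same second moments, so their costs are ordered by `∫ x * y`, which
quadrant domination controls. -/
theorem W2sq_eq_of_forall_measure_Ioi_prod_Ioi_le [IsFiniteMeasure ρ₁]
    (h₁ : Integrable (fun x => x ^ 2) ρ₁) (h₂ : Integrable (fun x => x ^ 2) ρ₂)
    {γ : Measure (ℝ × ℝ)} (hγ : IsCoupling γ ρ₁ ρ₂)
    (hmax : ∀ π, IsCoupling π ρ₁ ρ₂ → ∀ s t, π (Ioi s ×ˢ Ioi t) ≤ γ (Ioi s ×ˢ Ioi t)) :
    W2sq ρ₁ ρ₂ = ∫⁻ q, ENNReal.ofReal ((q.1 - q.2) ^ 2) ∂γ := by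
  refine le_antisymm (iInf₂_le γ hγ) (le_iInf₂ fun π (hπ : IsCoupling π ρ₁ ρ₂) => ?_)
  have := hπ.isFiniteMeasure
  have := hγ.isFiniteMeasure
  have hmul : ∀ κ, IsCoupling κ ρ₁ ρ₂ → Integrable (fun q => q.1 * q.2) κ := fun κ hκ =>
    (hκ.memLp_comp_fst (memLp_two_id h₁)).integrable_mul
      (hκ.memLp_comp_snd (memLp_two_id h₂))
  rw [hγ.lintegral_cost h₁ h₂, hπ.lintegral_cost h₁ h₂]
  refine ENNReal.ofReal_le_ofReal ?_
  have := integral_mul_le_of_measure_Ioi_prod_Ioi_le (hπ.1.trans hγ.1.symm)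
    (hπ.2.trans hγ.2.symm) (hmax π hπ) (hmul π hπ) (hmul γ hγ)
  linarith

theorem W2sq_map_eq_of_monotoneOn {μ : Measure ℝ} {S : Set ℝ} (hS : MeasurableSet S)
    [IsFiniteMeasure (μ.restrict S)] {h₁ h₂ : ℝ → ℝ} (hm₁ : MonotoneOn h₁ S)
    (hm₂ : MonotoneOn h₂ S) (h₁2 : Integrable (fun x => x ^ 2) ((μ.restrict S).map h₁))
    (h₂2 : Integrable (fun x => x ^ 2) ((μ.restrict S).map h₂)) :
    W2sq ((μ.restrict S).map h₁) ((μ.restrict S).map h₂) =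
      ∫⁻ p in S, ENNReal.ofReal ((h₁ p - h₂ p) ^ 2) ∂μ := by
  have hae₁ := aemeasurable_restrict_of_monotoneOn (μ := μ) hS hm₁
  have hae₂ := aemeasurable_restrict_of_monotoneOn (μ := μ) hS hm₂
  have hγ : IsCoupling ((μ.restrict S).map fun p => (h₁ p, h₂ p)) ((μ.restrict S).map h₁)
      ((μ.restrict S).map h₂) :=
    ⟨AEMeasurable.map_map_of_aemeasurable measurable_fst.aemeasurable (hae₁.prodMk hae₂),
      AEMeasurable.map_map_of_aemeasurable measurable_snd.aemeasurable (hae₁.prodMk hae₂)⟩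
  rw [W2sq_eq_of_forall_measure_Ioi_prod_Ioi_le h₁2 h₂2 hγ fun π hπ =>
      measure_Ioi_prod_Ioi_le_map_prodMk hS hm₁ hm₂ hπ.1 hπ.2,
    lintegral_map' (by fun_prop) (hae₁.prodMk hae₂)]

end Couplings

section OTplan1D

variable {μ ν : Measure ℝ}

/-- `quantileFn` takes junk values at the null endpoints `0` and `1` (an `sInf` of `univ` or of
`∅`). -/
lemma OTplan1D_eq_map_Ioo :
    OTplan1D μ ν = (volume.restrict (Ioo 0 1)).map fun p => (quantileFn μ p, quantileFn ν p) := by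
  rw [OTplan1D, Measure.restrict_congr_set Ioo_ae_eq_Icc]

variable [IsProbabilityMeasure μ] [IsProbabilityMeasure ν]

lemma isCoupling_OTplan1D : IsCoupling (OTplan1D μ ν) μ ν := by
  have hQ := (aemeasurable_quantileFn μ).prodMk (aemeasurable_quantileFn ν)
  rw [OTplan1D_eq_map_Ioo]
  exact ⟨(AEMeasurable.map_map_of_aemeasurable measurable_fst.aemeasurable hQ).trans
      (map_quantileFn μ),
    (AEMeasurable.map_map_of_aemeasurable measurable_snd.aemeasurable hQ).trans (map_quantileFn ν)⟩

/-- `g ∘ quantileFn μ` is monotone and pushes Lebesgue measure to `g#μ`, so `(g × id)#π*` is the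
comonotone coupling of `g#μ` and `ν`. -/
theorem W2sq_map_eq_integral_OTplan1D {g : ℝ → ℝ} (hg : Monotone g)
    (hg2 : Integrable (fun x => x ^ 2) (μ.map g)) (hν2 : Integrable (fun x => x ^ 2) ν) :
    W2sq (μ.map g) ν = ENNReal.ofReal (∫ q, (g q.1 - q.2) ^ 2 ∂OTplan1D μ ν) := by
  have hmap : (volume.restrict (Ioo 0 1)).map (g ∘ quantileFn μ) = μ.map g := by
    rw [← AEMeasurable.map_map_of_aemeasurable hg.measurable.aemeasurable
      (aemeasurable_quantileFn μ), map_quantileFn]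
  have hW := W2sq_map_eq_of_monotoneOn measurableSet_Ioo
    (hg.comp_monotoneOn (monotoneOn_quantileFn μ)) (monotoneOn_quantileFn ν)
    (hmap ▸ hg2) ((map_quantileFn ν).symm ▸ hν2)
  rw [hmap, map_quantileFn] at hW
  have hπ := isCoupling_OTplan1D (μ := μ) (ν := ν)
  rw [hW, ← lintegral_ofReal_sub_sq
      (hπ.memLp_comp_fst (memLp_two_of_map hg.measurable.aemeasurable hg2))
      (hπ.memLp_comp_snd (memLp_two_id hν2)), OTplan1D_eq_map_Ioo,
    lintegral_map' (by have := hg.measurable; fun_prop)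
      ((aemeasurable_quantileFn μ).prodMk (aemeasurable_quantileFn ν))]
  rfl

theorem integral_OTplan1D_sub_sq (hν2 : Integrable (fun x => x ^ 2) ν) {bar : ℝ → ℝ}
    (hbarmeas : Measurable bar)
    (hbar : (fun q : ℝ × ℝ => bar q.1) =ᵐ[OTplan1D μ ν]
      (OTplan1D μ ν)[(fun q : ℝ × ℝ => q.2) | MeasurableSpace.comap Prod.fst inferInstance])
    {g : ℝ → ℝ} (hgm : Measurable g) (hg : MemLp g 2 μ) :
    ∫ q, (g q.1 - q.2) ^ 2 ∂OTplan1D μ ν =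
      ∫ x, (g x - bar x) ^ 2 ∂μ + ∫ y, y ^ 2 ∂ν - ∫ x, bar x ^ 2 ∂μ := by
  have hπ := isCoupling_OTplan1D (μ := μ) (ν := ν)
  have := hπ.isFiniteMeasure
  have hgfst : StronglyMeasurable[MeasurableSpace.comap Prod.fst inferInstance]
      fun q : ℝ × ℝ => g q.1 :=
    (hgm.comp (comap_measurable Prod.fst)).stronglyMeasurable
  rw [integral_sub_sq_of_ae_eq_condExp measurable_fst.comap_le hgfst (hπ.memLp_comp_fst hg)
      (hπ.memLp_comp_snd (memLp_two_id hν2)) hbar,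
    hπ.integral_comp_fst (f := fun x => (g x - bar x) ^ 2) (by fun_prop),
    hπ.integral_comp_snd (f := fun y => y ^ 2) (by fun_prop),
    hπ.integral_comp_fst (f := fun x => bar x ^ 2) (by fun_prop)]

end OTplan1D

theorem one_dim_equiv_projection_general (μ ν : MeasureTheory.Measure ℝ)
    [IsProbabilityMeasure μ] [IsProbabilityMeasure ν]
    (hν2 : MeasureTheory.Integrable (fun x => x ^ 2) ν)
    (G : Set (ℝ → ℝ))
    (hG : ∀ g ∈ G, Monotone g ∧
      MeasureTheory.Integrable (fun x => x ^ 2) (MeasureTheory.Measure.map g μ))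
    (bar : ℝ → ℝ) (hbarmeas : Measurable bar)
    (hbar : (fun q : ℝ × ℝ => bar q.1) =ᵐ[OTplan1D μ ν]
      (OTplan1D μ ν)[(fun q : ℝ × ℝ => q.2) |
        MeasurableSpace.comap Prod.fst inferInstance]) :
    (∀ g ∈ G,
      (W2sq (MeasureTheory.Measure.map g μ) ν).toReal =
        (∫ x, (g x - bar x) ^ 2 ∂μ) + (∫ y, y ^ 2 ∂ν) -
          ∫ y, y ^ 2 ∂(MeasureTheory.Measure.map bar μ)) ∧
    {g | g ∈ G ∧ ∀ g' ∈ G,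
        W2sq (MeasureTheory.Measure.map g μ) ν ≤
          W2sq (MeasureTheory.Measure.map g' μ) ν} =
    {g | g ∈ G ∧ ∀ g' ∈ G,
        (∫ x, (g x - bar x) ^ 2 ∂μ) ≤ ∫ x, (g' x - bar x) ^ 2 ∂μ} := by
  have hW : ∀ g ∈ G, W2sq (μ.map g) ν = ENNReal.ofReal (∫ q, (g q.1 - q.2) ^ 2 ∂OTplan1D μ ν) :=
    fun g hg => W2sq_map_eq_integral_OTplan1D (hG g hg).1 (hG g hg).2 hν2
  have hcost : ∀ g ∈ G, ∫ q, (g q.1 - q.2) ^ 2 ∂OTplan1D μ ν =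
      ∫ x, (g x - bar x) ^ 2 ∂μ + ∫ y, y ^ 2 ∂ν - ∫ y, y ^ 2 ∂(μ.map bar) := fun g hg => by
    have hgm := (hG g hg).1.measurable
    rw [integral_OTplan1D_sub_sq hν2 hbarmeas hbar hgm
        (memLp_two_of_map hgm.aemeasurable (hG g hg).2),
      integral_map hbarmeas.aemeasurable (continuous_pow 2).aestronglyMeasurable]
  have hnonneg : ∀ g : ℝ → ℝ, 0 ≤ ∫ q, (g q.1 - q.2) ^ 2 ∂OTplan1D μ ν := fun g =>
    integral_nonneg fun _ => sq_nonneg _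
  refine ⟨fun g hg => by rw [hW g hg, ENNReal.toReal_ofReal (hnonneg g), hcost g hg], ?_⟩
  ext g
  refine and_congr_right fun hg => forall₂_congr fun g' hg' => ?_
  rw [hW g hg, hW g' hg', ENNReal.ofReal_le_ofReal_iff (hnonneg g'), hcost g hg, hcost g' hg',
    sub_le_sub_iff_right, add_le_add_iff_right]

/-- In dimension one, for a class G of non-decreasing maps pushing μ into P₂(ℝ),
W₂²(g#μ, ν) = ‖g − π̄*‖²_{L²(μ)} + m₂(ν) − m₂(π̄*#μ), where π̄* is the barycentric
projection of the quadratic-cost optimal plan π*; hence the minimisers over G of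
W₂²(g#μ, ν) and of ‖g − π̄*‖²_{L²(μ)} coincide. -/
theorem one_dim_equiv_projection (μ ν : MeasureTheory.Measure ℝ)
    [IsProbabilityMeasure μ] [IsProbabilityMeasure ν]
    (hμ2 : MeasureTheory.Integrable (fun x => x ^ 2) μ)
    (hν2 : MeasureTheory.Integrable (fun x => x ^ 2) ν)
    (G : Set (ℝ → ℝ))
    (hG : ∀ g ∈ G, Monotone g ∧
      MeasureTheory.Integrable (fun x => x ^ 2) (MeasureTheory.Measure.map g μ))
    (bar : ℝ → ℝ) (hbarmeas : Measurable bar)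
    (hbar : (fun q : ℝ × ℝ => bar q.1) =ᵐ[OTplan1D μ ν]
      (OTplan1D μ ν)[(fun q : ℝ × ℝ => q.2) |
        MeasurableSpace.comap Prod.fst inferInstance]) :
    (∀ g ∈ G,
      (W2sq (MeasureTheory.Measure.map g μ) ν).toReal =
        (∫ x, (g x - bar x) ^ 2 ∂μ) + (∫ y, y ^ 2 ∂ν) -
          ∫ y, y ^ 2 ∂(MeasureTheory.Measure.map bar μ)) ∧
    {g | g ∈ G ∧ ∀ g' ∈ G,
        W2sq (MeasureTheory.Measure.map g μ) ν ≤
          W2sq (MeasureTheory.Measure.map g' μ) ν} =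
    {g | g ∈ G ∧ ∀ g' ∈ G,
        (∫ x, (g x - bar x) ^ 2 ∂μ) ≤ ∫ x, (g' x - bar x) ^ 2 ∂μ} :=
  one_dim_equiv_projection_general μ ν hν2 G hG bar hbarmeas hbar
end
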